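/- Fix an integer k ≥ 2 and let G=(V,E) be a simple graph such that EMH_{n,n}(G) = 0 (equivalently, ker(∂_{n,n} : EMC_{n,n}(G) → EMC_{n−1,n}(G)) = 0) for every 2 ≤ n ≤ k. Then the kernel of ∂_{k,k} : MC_{k,k}(G) → MC_{k−1,k}(G) equals the ℤ-span of the set of k-trails of the form (x_0,x_1,x_0,x_1,…) that alternate between two distinct adjacent vertices x_0 and x_1. In particular, every generator of MH_{k,k}(G) = ker(∂_{k,k}) is such an alternating k-trail. -/

import Mathlib

open scoped Classical

variable {V : Type*}

/-- Length of the walk described by a list of landmarks: sum of path-metric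
distances between consecutive entries (`⊤`-valued if some pair is unreachable). -/
noncomputable def mlen (G : SimpleGraph V) : List V → ℕ∞
  | [] => 0
  | [_] => 0
  | a :: b :: t => G.edist a b + mlen G (b :: t)

/-- A list of landmarks is a trail if consecutive entries are distinct and reachable. -/
def IsTrailList (G : SimpleGraph V) (l : List V) : Prop :=
  l.Chain' fun a b => a ≠ b ∧ G.Reachable a b

/-- `trails G k ℓ` is the set `T_{k,ℓ}(G)` of `k`-trails of length `ℓ`,
encoded as lists with `k+1` entries. -/
def trails (G : SimpleGraph V) (k ℓ : ℕ) : Set (List V) :=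
  {l | l.length = k + 1 ∧ IsTrailList G l ∧ mlen G l = (ℓ : ℕ∞)}

/-- `etrails G k ℓ` is the set `ET_{k,ℓ}(G)` of eulerian `k`-trails of length `ℓ`. -/
def etrails (G : SimpleGraph V) (k ℓ : ℕ) : Set (List V) :=
  {l | l ∈ trails G k ℓ ∧ l.Nodup}

/-- Boundary of a single generator: `∂_{·,ℓ}(x₀,…,x_k) = Σ_{i=1}^{k-1} (-1)^i ∂^i`,
where `∂^i` deletes the `i`-th landmark if this does not change the length. -/
noncomputable def bdryElt (G : SimpleGraph V) (ℓ : ℕ) (l : List V) : List V →₀ ℤ :=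
  ∑ i ∈ Finset.Ioo 0 (l.length - 1),
    if mlen G (l.eraseIdx i) = (ℓ : ℕ∞) then ((-1 : ℤ) ^ i) • Finsupp.single (l.eraseIdx i) 1
    else 0

/-- The magnitude differential (length parameter `ℓ`) on the ambient free abelian group
on all landmark lists.  Its restriction to `MC_{k,ℓ}(G)` (chains supported on
`trails G k ℓ`) is `∂_{k,ℓ}`. -/
noncomputable def bdry (G : SimpleGraph V) (ℓ : ℕ) : (List V →₀ ℤ) →ₗ[ℤ] (List V →₀ ℤ) :=
  Finsupp.lsum ℤ fun l => LinearMap.toSpanSingleton ℤ _ (bdryElt G ℓ l)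

/-- `MC_{k,ℓ}(G)`: the free abelian group on `T_{k,ℓ}(G)`, realized as the submodule of
finitely supported `ℤ`-valued functions supported on trails. -/
noncomputable def MC (G : SimpleGraph V) (k ℓ : ℕ) : Submodule ℤ (List V →₀ ℤ) :=
  Finsupp.supported ℤ ℤ (trails G k ℓ)

/-- `EMC_{k,ℓ}(G)`: the free abelian group on `ET_{k,ℓ}(G)`. -/
noncomputable def EMC (G : SimpleGraph V) (k ℓ : ℕ) : Submodule ℤ (List V →₀ ℤ) :=
  Finsupp.supported ℤ ℤ (etrails G k ℓ)

/-- `EMH_{k,k}(G) = ker(∂_{k,k}|_{EMC_{k,k}(G)})`, the first-diagonal eulerian magnitude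
homology group (`EMC_{k+1,k}(G) = 0`, so homology is just the kernel). -/
noncomputable def EMHkk (G : SimpleGraph V) (k : ℕ) : Submodule ℤ (List V →₀ ℤ) :=
  EMC G k k ⊓ LinearMap.ker (bdry G k)

/-- `MH_{k,k}(G) = ker(∂_{k,k}|_{MC_{k,k}(G)})`. -/
noncomputable def MHkk (G : SimpleGraph V) (k : ℕ) : Submodule ℤ (List V →₀ ℤ) :=
  MC G k k ⊓ LinearMap.ker (bdry G k)

/-- `β_{k,k}(G)`, the rank of `EMH_{k,k}(G)`. -/
noncomputable def emBetti (G : SimpleGraph V) (k : ℕ) : ℕ :=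
  Module.finrank ℤ (EMHkk G k)

/-- `c(G,H)`: the number of vertex subsets of `G` whose induced subgraph is isomorphic
to `H`. -/
noncomputable def subgraphCount (G : SimpleGraph V) {W : Type*} (H : SimpleGraph W) : ℕ :=
  Set.ncard {s : Set V | Nonempty ((G.induce s) ≃g H)}

/-!
`EMH_{2,2}(G) = 0` forces every path `a - b - c` with `a ≠ c` to be a geodesic with a unique
midpoint `b`. A `k`-trail of length `k` is a walk along edges. If such a walk `w` does not
alternate, some `w_j ≠ w_{j+2}`; deleting `w_{j+1}` leaves a face of length `k` which has `w` as
its only coface, so the coefficient of `w` in any cycle vanishes. Alternating trails are cycles,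
since each of their faces is shorter than `k`.
-/

lemma List.eq_of_eraseIdx_eq_of_getElem_eq {α : Type*} {l w : List α} {i : ℕ}
    (he : l.eraseIdx i = w.eraseIdx i) (hl : i < l.length) (hw : i < w.length)
    (hi : l[i] = w[i]) : l = w := by
  rw [← List.insertIdx_eraseIdx_getElem hl, ← List.insertIdx_eraseIdx_getElem hw, he, hi]

section

variable {G : SimpleGraph V}

@[simp] lemma mlen_cons_cons (a b : V) (t : List V) :
    mlen G (a :: b :: t) = G.edist a b + mlen G (b :: t) := rfl

lemma mlen_of_isChain_adj : ∀ {l : List V}, l.IsChain G.Adj → mlen G l = (l.length - 1 : ℕ)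
  | [], _ | [_], _ => rfl
  | a :: b :: t, h => by
    rw [List.isChain_cons_cons] at h
    rw [mlen_cons_cons, mlen_of_isChain_adj h.2, SimpleGraph.edist_eq_one_iff_adj.mpr h.1]
    simp [add_comm]

lemma length_sub_one_le_mlen : ∀ {l : List V}, IsTrailList G l →
    ((l.length - 1 : ℕ) : ℕ∞) ≤ mlen G l
  | [], _ | [_], _ => le_rfl
  | a :: b :: t, h => by
    rw [IsTrailList, List.Chain', List.isChain_cons_cons] at h
    simpa [add_comm] using add_le_add (Order.one_le_iff_pos.2 (SimpleGraph.edist_pos_of_ne h.1.1)) (length_sub_one_le_mlen h.2)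

lemma isChain_adj_of_mlen_eq : ∀ {l : List V}, IsTrailList G l →
    mlen G l = (l.length - 1 : ℕ) → l.IsChain G.Adj
  | [], _, _ => .nil
  | [_], _, _ => .singleton _
  | a :: b :: t, h, hm => by
    rw [IsTrailList, List.Chain', List.isChain_cons_cons] at h
    have hab := Order.one_le_iff_pos.2 (SimpleGraph.edist_pos_of_ne (G := G) h.1.1)
    have ht := length_sub_one_le_mlen h.2
    simp only [mlen_cons_cons, List.length_cons, add_tsub_cancel_right] at hm ht
    have key : G.edist a b = 1 ∧ mlen G (b :: t) = t.length := by
      generalize G.edist a b = x at *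
      generalize mlen G (b :: t) = y at *
      lift x to ℕ using ne_top_of_le_ne_top (hm ▸ ENat.natCast_ne_top _) le_self_add
      lift y to ℕ using ne_top_of_le_ne_top (hm ▸ ENat.natCast_ne_top _) le_add_self
      norm_cast at *
      omega
    refine List.isChain_cons_cons.2 ⟨SimpleGraph.edist_eq_one_iff_adj.1 key.1,
      isChain_adj_of_mlen_eq h.2 (by simpa using key.2)⟩

lemma mem_trails_self_iff {k : ℕ} {l : List V} :
    l ∈ trails G k k ↔ l.length = k + 1 ∧ l.IsChain G.Adj :=
  ⟨fun ⟨hl, ht, hm⟩ => ⟨hl, isChain_adj_of_mlen_eq ht (by simp [hm, hl])⟩,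
    fun ⟨hl, hc⟩ => ⟨hl, hc.imp fun _ _ h => ⟨h.ne, h.reachable⟩,
      by simp [mlen_of_isChain_adj hc, hl]⟩⟩

lemma mlen_eraseIdx_succ_of_isChain_adj : ∀ {l : List V}, l.IsChain G.Adj →
    ∀ {m : ℕ} (hm : m + 2 < l.length),
      mlen G (l.eraseIdx (m + 1)) = ((l.length - 3 : ℕ) : ℕ∞) + G.edist l[m] l[m + 2]
  | a :: b :: c :: t, h, 0, _ => by
    show G.edist a c + mlen G (c :: t) = _
    rw [mlen_of_isChain_adj (l := c :: t) h.tail.tail, add_comm]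
    rfl
  | a :: b :: t, h, m + 1, hm => by
    rw [List.isChain_cons_cons] at h
    have ih := mlen_eraseIdx_succ_of_isChain_adj h.2 (m := m) (by simpa using hm)
    simp only [List.length_cons] at ih hm
    show G.edist a b + mlen G (b :: t.eraseIdx m) = _
    rw [show mlen G (b :: t.eraseIdx m) = _ from ih, SimpleGraph.edist_eq_one_iff_adj.2 h.1,
      ← add_assoc, add_comm 1]
    congr 1
    rw [show (a :: b :: t).length - 3 = t.length + 1 - 3 + 1 by simp; omega]
    push_cast
    rfl

lemma mlen_eraseIdx_succ_eq_iff {k : ℕ} {l : List V} (hl : l ∈ trails G k k) {m : ℕ}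
    (hm : m + 2 < l.length) :
    mlen G (l.eraseIdx (m + 1)) = k ↔ G.edist l[m] l[m + 2] = 2 := by
  obtain ⟨hlen, hc⟩ := mem_trails_self_iff.1 hl
  rw [mlen_eraseIdx_succ_of_isChain_adj hc hm]
  generalize G.edist l[m] l[m + 2] = d
  induction d using ENat.recTopCoe
  · simp
  · norm_cast
    omega

lemma bdry_single (ℓ : ℕ) (l : List V) : bdry G ℓ (Finsupp.single l 1) = bdryElt G ℓ l := by
  simp [bdry]

lemma bdry_single_triple (a b c : V) :
    bdry G 2 (Finsupp.single [a, b, c] 1) =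
      if G.edist a c = 2 then -Finsupp.single [a, c] 1 else 0 := by
  simp [bdry_single, bdryElt, show Finset.Ioo 0 2 = {1} by decide, mlen]

lemma triple_mem_etrails {a b c : V} (hab : G.Adj a b) (hbc : G.Adj b c) (hac : a ≠ c) :
    [a, b, c] ∈ etrails G 2 2 :=
  ⟨mem_trails_self_iff.2 ⟨rfl, by simp [hab, hbc]⟩, by simp [hab.ne, hbc.ne, hac]⟩

/-- If `a - b - c` were not a geodesic, `(a, b, c)` would be a cycle in `EMH_{2,2}(G)`. -/
lemma edist_eq_two_of_adj_of_adj (h2 : EMHkk G 2 = ⊥) {a b c : V} (hab : G.Adj a b)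
    (hbc : G.Adj b c) (hac : a ≠ c) : G.edist a c = 2 := by
  by_contra hne
  have hmem : Finsupp.single [a, b, c] (1 : ℤ) ∈ EMHkk G 2 :=
    ⟨Finsupp.single_mem_supported ℤ 1 (triple_mem_etrails hab hbc hac),
      by simp [bdry_single_triple, hne]⟩
  simp [h2] at hmem

/-- Two midpoints `b, b'` of a geodesic `a - c` give the cycle `(a, b, c) - (a, b', c)`. -/
lemma eq_of_adj_of_adj_of_edist_eq_two (h2 : EMHkk G 2 = ⊥) {a b b' c : V}
    (hac : G.edist a c = 2) (hab : G.Adj a b) (hbc : G.Adj b c) (hab' : G.Adj a b')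
    (hb'c : G.Adj b' c) : b = b' := by
  by_contra hne
  have hac' : a ≠ c := by rintro rfl; simp at hac
  have hmem : Finsupp.single [a, b, c] (1 : ℤ) - Finsupp.single [a, b', c] 1 ∈ EMHkk G 2 :=
    ⟨sub_mem (Finsupp.single_mem_supported ℤ 1 (triple_mem_etrails hab hbc hac'))
      (Finsupp.single_mem_supported ℤ 1 (triple_mem_etrails hab' hb'c hac')),
      by simp [bdry_single_triple]⟩
  simp [h2, sub_eq_zero, Finsupp.single_left_inj, hne] at hmem

lemma bdry_apply (ℓ : ℕ) (c : List V →₀ ℤ) (u : List V) :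
    bdry G ℓ c u = ∑ l ∈ c.support, ∑ i ∈ Finset.Ioo 0 (l.length - 1),
      if l.eraseIdx i = u ∧ mlen G u = ℓ then c l * (-1) ^ i else 0 := by
  simp only [bdry, Finsupp.lsum_apply, Finsupp.sum, Finsupp.finsetSum_apply,
    LinearMap.toSpanSingleton_apply, Finsupp.smul_apply, bdryElt, smul_eq_mul, Finset.mul_sum]
  refine Finset.sum_congr rfl fun l _ => Finset.sum_congr rfl fun i _ => ?_
  by_cases hi : l.eraseIdx i = u
  · subst hi
    by_cases hu : mlen G (l.eraseIdx i) = ℓ <;> simp [hu]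
  · simp only [hi, false_and, if_false]
    split_ifs <;> simp [hi]

lemma bdry_apply_eq_of_unique_coface {ℓ : ℕ} {c : List V →₀ ℤ} {w u : List V} {j : ℕ}
    (hj : j ∈ Finset.Ioo 0 (w.length - 1)) (hwu : w.eraseIdx j = u) (hu : mlen G u = ℓ)
    (huniq : ∀ l ∈ c.support, ∀ i ∈ Finset.Ioo 0 (l.length - 1), l.eraseIdx i = u →
      l = w ∧ i = j) :
    bdry G ℓ c u = c w * (-1) ^ j := by
  rw [bdry_apply]
  by_cases hw : w ∈ c.support
  · rw [Finset.sum_eq_single_of_mem w hw, Finset.sum_eq_single_of_mem j hj, if_pos ⟨hwu, hu⟩]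
    · intro i hi hij
      exact if_neg fun h => hij (huniq w hw i hi h.1).2
    · intro l hl hlw
      exact Finset.sum_eq_zero fun i hi => if_neg fun h => hlw (huniq l hl i hi h.1).1
  · rw [Finsupp.notMem_support_iff.1 hw, zero_mul]
    refine Finset.sum_eq_zero fun l hl => Finset.sum_eq_zero fun i hi => if_neg fun h => ?_
    exact hw ((huniq l hl i hi h.1).1 ▸ hl)

lemma adj_getElem_eraseIdx_succ {l : List V} (hl : l.IsChain G.Adj) {m p : ℕ} (hpm : p ≠ m)
    (hp : p + 1 < (l.eraseIdx (m + 1)).length) :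
    G.Adj (l.eraseIdx (m + 1))[p] (l.eraseIdx (m + 1))[p + 1] := by
  have := List.length_eraseIdx_le (l := l) (m + 1)
  simp only [List.getElem_eraseIdx]
  split_ifs
  · exact List.isChain_iff_getElem.1 hl p (by omega)
  · omega
  · omega
  · have := List.length_eraseIdx_of_lt (l := l) (i := m + 1) (by omega)
    exact List.isChain_iff_getElem.1 hl (p + 1) (by omega)

/-- Every step of a face `w.eraseIdx (j + 1)` other than the `j`-th is an edge of `w`. -/
lemma index_eq_of_eraseIdx_succ_eq {l w : List V} (hw : w.IsChain G.Adj) {m j : ℕ}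
    (hm : m + 2 < l.length) (hlm : ¬ G.Adj l[m] l[m + 2])
    (he : l.eraseIdx (m + 1) = w.eraseIdx (j + 1)) : m = j := by
  by_contra hmj
  have hlen : m + 1 < (l.eraseIdx (m + 1)).length := by
    rw [List.length_eraseIdx_of_lt (by omega)]; omega
  have e0 := List.getElem_of_eq he (i := m) (by omega)
  have e1 := List.getElem_of_eq he hlen
  rw [List.getElem_eraseIdx_of_lt _ (by omega)] at e0
  rw [List.getElem_eraseIdx_of_ge _ (by omega)] at e1
  exact hlm (e0 ▸ e1 ▸ adj_getElem_eraseIdx_succ hw hmj (he ▸ hlen))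

/-- The removed index is the face's only non-edge step, and the removed landmark is the unique
midpoint of that step. -/
lemma eq_of_eraseIdx_succ_eq (h2 : EMHkk G 2 = ⊥) {l w : List V} (hl : l.IsChain G.Adj)
    (hw : w.IsChain G.Adj) (hlen : l.length = w.length) {m j : ℕ} (hm : m + 2 < l.length)
    (hlm : G.edist l[m] l[m + 2] = 2) (he : l.eraseIdx (m + 1) = w.eraseIdx (j + 1)) :
    l = w ∧ m = j := by
  obtain rfl : m = j := index_eq_of_eraseIdx_succ_eq hw hm
    (fun h => by simp [SimpleGraph.edist_eq_one_iff_adj.2 h] at hlm) he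
  have hlen' : m + 1 < (l.eraseIdx (m + 1)).length := by
    rw [List.length_eraseIdx_of_lt (by omega)]; omega
  have e0 := List.getElem_of_eq he (i := m) (by omega)
  have e2 := List.getElem_of_eq he hlen'
  rw [List.getElem_eraseIdx_of_lt _ (by omega), List.getElem_eraseIdx_of_lt _ (by omega)] at e0
  rw [List.getElem_eraseIdx_of_ge _ (by omega), List.getElem_eraseIdx_of_ge _ (by omega)] at e2
  have hadj := List.isChain_iff_getElem.1 hl
  have wadj := List.isChain_iff_getElem.1 hw
  have hmid : l[m + 1] = w[m + 1] := eq_of_adj_of_adj_of_edist_eq_two h2 hlm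
    (hadj m (by omega)) (hadj (m + 1) (by omega)) (e0 ▸ wadj m (by omega))
    (e2 ▸ wadj (m + 1) (by omega))
  exact ⟨List.eq_of_eraseIdx_eq_of_getElem_eq he (by omega) (by omega) hmid, rfl⟩

def IsAlternating (l : List V) : Prop :=
  ∀ i (h : i + 2 < l.length), l[i + 2] = l[i]

def alternatingTrail (u v : V) (k : ℕ) : List V :=
  List.ofFn fun i : Fin (k + 1) => if i.val % 2 = 0 then u else v

@[simp] lemma length_alternatingTrail (u v : V) (k : ℕ) :
    (alternatingTrail u v k).length = k + 1 := by
  simp [alternatingTrail]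

@[simp] lemma getElem_alternatingTrail (u v : V) (k : ℕ) {i : ℕ}
    (h : i < (alternatingTrail u v k).length) :
    (alternatingTrail u v k)[i] = if i % 2 = 0 then u else v := by
  simp only [alternatingTrail, List.getElem_ofFn]

lemma isAlternating_alternatingTrail (u v : V) (k : ℕ) :
    IsAlternating (alternatingTrail u v k) := by
  intro i h
  simp [Nat.add_mod_right]

lemma alternatingTrail_mem_trails {u v : V} (h : G.Adj u v) (k : ℕ) :
    alternatingTrail u v k ∈ trails G k k := by
  refine mem_trails_self_iff.2 ⟨by simp, List.isChain_iff_getElem.2 fun i hi => ?_⟩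
  rcases Nat.mod_two_eq_zero_or_one i with hi2 | hi2
  · simpa [hi2, Nat.succ_mod_two_eq_one_iff.2 hi2] using h
  · simpa [hi2, Nat.succ_mod_two_eq_zero_iff.2 hi2] using h.symm

lemma IsAlternating.eq_alternatingTrail {l : List V} (ha : IsAlternating l) {k : ℕ}
    (hl : l.length = k + 1) (hk : 1 ≤ k) :
    l = alternatingTrail (l[0]'(by omega)) (l[1]'(by omega)) k := by
  refine List.ext_getElem (by simp [hl]) fun i hi _ => ?_
  induction i using Nat.strong_induction_on with
  | _ i ih =>
    match i, hi with
    | 0, _ | 1, _ => simp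
    | m + 2, hm =>
      rw [ha m hm, ih m (by omega) (by omega) (by simp; omega), getElem_alternatingTrail,
        getElem_alternatingTrail, Nat.add_mod_right]

lemma bdryElt_eq_zero_of_isAlternating {k : ℕ} {l : List V} (hl : l ∈ trails G k k)
    (ha : IsAlternating l) : bdryElt G k l = 0 := by
  refine Finset.sum_eq_zero fun i hi => if_neg ?_
  obtain ⟨m, rfl⟩ : ∃ m, i = m + 1 := ⟨i - 1, by simp at hi; omega⟩
  have hm : m + 2 < l.length := by simp at hi; omega
  simp [mlen_eraseIdx_succ_eq_iff hl hm, ha m hm]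

/-- A non-alternating trail `w` has a face `u` of the same length whose only coface is `w`, so
the coefficient of `u` in `∂ c` is `± c w`. -/
lemma apply_eq_zero_of_not_isAlternating (h2 : EMHkk G 2 = ⊥) {k : ℕ} {c : List V →₀ ℤ}
    (hc : c ∈ MHkk G k) {w : List V} (hw : ¬ IsAlternating w) : c w = 0 := by
  by_contra hcw
  have hsupp : ∀ l ∈ c.support, l ∈ trails G k k := fun l hl =>
    (Finsupp.mem_supported _ _).1 hc.1 hl
  have hwt := hsupp w (Finsupp.mem_support_iff.2 hcw)
  obtain ⟨hwlen, hwc⟩ := mem_trails_self_iff.1 hwt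
  obtain ⟨j, hj, hne⟩ : ∃ j, ∃ h : j + 2 < w.length, w[j + 2] ≠ w[j] := by
    simpa [IsAlternating] using hw
  have hface := (mlen_eraseIdx_succ_eq_iff hwt hj).2 <| edist_eq_two_of_adj_of_adj h2
    (List.isChain_iff_getElem.1 hwc j (by omega))
    (List.isChain_iff_getElem.1 hwc (j + 1) (by omega)) hne.symm
  have hbdry := bdry_apply_eq_of_unique_coface (c := c) (j := j + 1) (by simp; omega) rfl hface
    fun l hl i hi he => by
      obtain ⟨m, rfl⟩ : ∃ m, i = m + 1 := ⟨i - 1, by simp at hi; omega⟩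
      obtain ⟨hllen, hlc⟩ := mem_trails_self_iff.1 (hsupp l hl)
      have hm : m + 2 < l.length := by simp at hi; omega
      obtain ⟨rfl, rfl⟩ := eq_of_eraseIdx_succ_eq h2 hlc hwc (hllen.trans hwlen.symm) hm
        ((mlen_eraseIdx_succ_eq_iff (hsupp l hl) hm).1 (he ▸ hface)) he
      exact ⟨rfl, rfl⟩
  rw [LinearMap.mem_ker.1 hc.2, Finsupp.coe_zero, Pi.zero_apply] at hbdry
  exact hcw ((mul_eq_zero.1 hbdry.symm).resolve_right (pow_ne_zero _ (by norm_num)))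

lemma MHkk_eq_supported_isAlternating (h2 : EMHkk G 2 = ⊥) (k : ℕ) :
    MHkk G k = Finsupp.supported ℤ ℤ {l | l ∈ trails G k k ∧ IsAlternating l} := by
  refine le_antisymm (fun c hc => ?_) ?_
  · refine fun l hl => ⟨(Finsupp.mem_supported _ _).1 hc.1 hl, ?_⟩
    by_contra ha
    exact Finsupp.mem_support_iff.1 hl (apply_eq_zero_of_not_isAlternating h2 hc ha)
  · rw [Finsupp.supported_eq_span_single, Submodule.span_le]
    rintro _ ⟨l, ⟨hl, ha⟩, rfl⟩
    exact ⟨Finsupp.single_mem_supported ℤ 1 hl,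
      by simp [bdry_single, bdryElt_eq_zero_of_isAlternating hl ha]⟩

end

/-- Theorem 3.20: if `EMH_{n,n}(G) = 0` for all `2 ≤ n ≤ k` (`k ≥ 2`),
then `MH_{k,k}(G) = ker ∂_{k,k}` is the `ℤ`-span of the `k`-trails of the form
`(x_0, x_1, x_0, x_1, …)` alternating between two distinct adjacent vertices. -/
theorem mh_generated_by_alternating_trails {V : Type*} (G : SimpleGraph V) (k : ℕ)
    (hk : 2 ≤ k) (hEMH : ∀ n, 2 ≤ n → n ≤ k → EMHkk G n = ⊥) :
    MHkk G k = Submodule.span ℤ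
      {c : List V →₀ ℤ | ∃ u v : V, G.Adj u v ∧
        c = Finsupp.single
              (List.ofFn fun i : Fin (k + 1) => if i.val % 2 = 0 then u else v) 1} := by
  rw [MHkk_eq_supported_isAlternating (hEMH 2 le_rfl hk), Finsupp.supported_eq_span_single]
  congr 1
  ext c
  constructor
  · rintro ⟨l, ⟨hl, ha⟩, rfl⟩
    obtain ⟨hlen, hlc⟩ := mem_trails_self_iff.1 hl
    exact ⟨_, _, List.isChain_iff_getElem.1 hlc 0 (by omega),
      congrArg (Finsupp.single · 1) (ha.eq_alternatingTrail hlen (by omega))⟩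
  · rintro ⟨u, v, huv, rfl⟩
    exact ⟨_, ⟨alternatingTrail_mem_trails huv k, isAlternating_alternatingTrail u v k⟩, rfl⟩
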